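/- arXiv:1306.3201 — 3 statements merged into one kernel-verified Lean document; each statement's English description precedes it below -/
import Mathlib

section
/- Define I_{lm}(Θ) = ∫₀^Θ X_{lm}(θ) sin θ dθ. Then for l ≥ 2 and 0 ≤ m < l, I_{lm}(Θ) = ((l-2)/(l+1)) √((2l+1)((l-1)²-m²)/((2l-3)(l²-m²))) I_{l-2,m}(Θ) + (1/(l+1)) √((4l²-1)/(l²-m²)) sin²Θ · X_{l-1,m}(Θ). -/
open MeasureTheory intervalIntegral

/-- Associated Legendre function `P_{lm}(x)` of integer degree `l ≥ 0` and order `0 ≤ m`. -/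
noncomputable def legendreP (l m : ℕ) (x : ℝ) : ℝ :=
  (1 / (2 ^ l * (Nat.factorial l : ℝ))) * (1 - x ^ 2) ^ ((m : ℝ) / 2) *
    iteratedDeriv (l + m) (fun t : ℝ => (t ^ 2 - 1) ^ l) x

/-- 4π-normalized associated Legendre function `X_{lm}(θ)`, with the convention
`X_{lm} = 0` for `m < 0` or `m > l`. -/
noncomputable def Xlm (l : ℕ) (m : ℤ) (θ : ℝ) : ℝ :=
  if 0 ≤ m ∧ m ≤ (l : ℤ) then
    (-1 : ℝ) ^ m.toNat * Real.sqrt ((2 * (l : ℝ) + 1) / (4 * Real.pi)) *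
      Real.sqrt ((Nat.factorial (l - m.toNat) : ℝ) / (Nat.factorial (l + m.toNat) : ℝ)) *
      legendreP l m.toNat (Real.cos θ)
  else 0

/-- `I_{lm}(Θ) = ∫₀^Θ X_{lm}(θ) sin θ dθ`. -/
noncomputable def Ilm (l : ℕ) (m : ℤ) (Θ : ℝ) : ℝ :=
  ∫ θ in (0 : ℝ)..Θ, Xlm l m θ * Real.sin θ

/-!
By Rodrigues' formula, on `[0, π]` one has `X_{lm}(θ) = c_{lm} · sin^m θ · D^{l+m}(x² - 1)^l`
at `x = cos θ`, with an explicit constant `c_{lm}`. Writing `u_j = (x² - 1)^j`, the three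
identities `(x² - 1) u_j' = 2j x u_j`, `u_{j+1}' = 2(j+1) x u_j` and `x² u_j = u_{j+1} + u_j`,
differentiated repeatedly, combine into a three-term identity showing that
`d/dθ [sin^{m+2} θ · D^{l+m-1} u_{l-1}(cos θ)]` is `sin θ` times a linear combination of the
unnormalized `X_{lm}` and `X_{l-2,m}`. Integrating over `[0, Θ]` gives the recursion up to
normalization, and the square roots are the ratios `c_{lm} / c_{l-2,m}` and `c_{lm} / c_{l-1,m}`.
-/

open Polynomial Real Set

section Rodrigues

variable {R : Type*} [CommRing R]

theorem derivative_X_sq_sub_one_pow_succ (j : ℕ) :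
    derivative ((X ^ 2 - 1 : R[X]) ^ (j + 1)) = 2 * ((j : R[X]) + 1) * (X ^ 2 - 1) ^ j * X := by
  rw [derivative_pow, derivative_sub, derivative_X_sq, derivative_one, C_eq_natCast, C_ofNat]
  push_cast
  ring

theorem iterate_derivative_X_sq_sub_one_pow_succ (j k : ℕ) :
    derivative^[k + 2] ((X ^ 2 - 1 : R[X]) ^ (j + 1)) =
      2 * ((j : R[X]) + 1) * (derivative^[k + 1] ((X ^ 2 - 1 : R[X]) ^ j) * X +
        ((k : R[X]) + 1) * derivative^[k] ((X ^ 2 - 1 : R[X]) ^ j)) := by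
  rw [Function.iterate_succ_apply, derivative_X_sq_sub_one_pow_succ,
    show 2 * ((j : R[X]) + 1) = ((2 * (j + 1) : ℕ) : R[X]) by push_cast; ring,
    mul_assoc, iterate_derivative_natCast_mul, iterate_derivative_mul_X]
  simp only [add_tsub_cancel_right, nsmul_eq_mul]
  push_cast
  ring

theorem iterate_derivative_X_sq_sub_one_pow_mul_X (j k : ℕ) :
    derivative^[k + 1] ((X ^ 2 - 1 : R[X]) ^ (j + 1)) * X +
        (k : R[X]) * derivative^[k] ((X ^ 2 - 1 : R[X]) ^ (j + 1)) =
      2 * ((j : R[X]) + 1) * (derivative^[k] ((X ^ 2 - 1 : R[X]) ^ (j + 1)) +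
        derivative^[k] ((X ^ 2 - 1 : R[X]) ^ j)) := by
  have h : derivative ((X ^ 2 - 1 : R[X]) ^ (j + 1)) * X =
      ((2 * (j + 1) : ℕ) : R[X]) * ((X ^ 2 - 1) ^ (j + 1) + (X ^ 2 - 1) ^ j) := by
    rw [derivative_X_sq_sub_one_pow_succ]
    push_cast
    ring
  have := congrArg (derivative^[k]) h
  rw [iterate_derivative_derivative_mul_X, iterate_derivative_natCast_mul,
    iterate_map_add, nsmul_eq_mul] at this
  push_cast at this
  linear_combination this

theorem iterate_derivative_of_X_sq_sub_one_mul_derivative {f : R[X]} {c : R}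
    (hf : (X ^ 2 - 1) * derivative f = C c * X * f) (k : ℕ) :
    (X ^ 2 - 1) * derivative^[k + 2] f + 2 * ((k : R[X]) + 1) * X * derivative^[k + 1] f +
        (k : R[X]) * ((k : R[X]) + 1) * derivative^[k] f =
      C c * (X * derivative^[k + 1] f + ((k : R[X]) + 1) * derivative^[k] f) := by
  induction k with
  | zero =>
    have := congrArg derivative hf
    simp only [derivative_mul, derivative_sub, derivative_X_sq, derivative_one, derivative_C,
      derivative_X, C_ofNat] at this
    simp only [Function.iterate_succ_apply', Function.iterate_zero_apply, Nat.cast_zero]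
    linear_combination this
  | succ k ih =>
    have := congrArg derivative ih
    simp only [derivative_mul, derivative_add, derivative_sub, derivative_X_sq, derivative_one,
      derivative_C, derivative_X, derivative_natCast, derivative_ofNat, C_ofNat,
      ← Function.iterate_succ_apply' derivative] at this
    push_cast
    linear_combination this

theorem iterate_derivative_X_sq_sub_one_pow_eq_zero {j k : ℕ} (h : 2 * j < k) :
    derivative^[k] ((X ^ 2 - 1 : R[X]) ^ j) = 0 := by
  refine iterate_derivative_eq_zero (lt_of_le_of_lt ?_ h)
  calc ((X ^ 2 - 1 : R[X]) ^ j).natDegree ≤ j * (X ^ 2 - 1 : R[X]).natDegree := natDegree_pow_le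
    _ ≤ 2 * j := by
      rw [mul_comm]
      gcongr
      compute_degree

theorem iterate_derivative_X_sq_sub_one_pow_three_term (n m : ℕ) :
    2 * ((n : R[X]) + 2) * (2 * (n : R[X]) + 3) *
        (((m : R[X]) + 2) * X * derivative^[n + m + 1] ((X ^ 2 - 1 : R[X]) ^ (n + 1)) +
          (X ^ 2 - 1) * derivative^[n + m + 2] ((X ^ 2 - 1 : R[X]) ^ (n + 1))) =
      ((n : R[X]) + 2 - (m : R[X])) * ((n : R[X]) + 3) *
          derivative^[n + m + 2] ((X ^ 2 - 1 : R[X]) ^ (n + 2)) -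
        4 * ((n : R[X]) + 2) * ((n : R[X]) + 1) * (n : R[X]) * ((n : R[X]) + (m : R[X]) + 1) *
          derivative^[n + m] ((X ^ 2 - 1 : R[X]) ^ n) := by
  have hode : (X ^ 2 - 1) * derivative ((X ^ 2 - 1 : R[X]) ^ (n + 1)) =
      C (2 * ((n : R) + 1)) * X * (X ^ 2 - 1) ^ (n + 1) := by
    rw [derivative_X_sq_sub_one_pow_succ]
    simp only [map_mul, map_add, map_natCast, map_one, C_ofNat]
    ring
  have h1 := iterate_derivative_X_sq_sub_one_pow_succ (R := R) (n + 1) (n + m)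
  have h2 := iterate_derivative_of_X_sq_sub_one_mul_derivative hode (n + m)
  have h3 := iterate_derivative_X_sq_sub_one_pow_mul_X (R := R) n (n + m)
  simp only [map_mul, map_add, map_natCast, map_one, C_ofNat] at h2
  rw [show n + 1 + 1 = n + 2 from rfl] at h1
  push_cast at h1 h2 h3
  linear_combination (-(((n : R[X]) + 2 - m) * ((n : R[X]) + 3))) * h1
    + (2 * ((n : R[X]) + 2) * (2 * (n : R[X]) + 3)) * h2
    - (2 * ((n : R[X]) + 2) * (n : R[X]) * ((n : R[X]) + (m : R[X]) + 1)) * h3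

end Rodrigues

theorem Polynomial.iteratedDeriv_eval (p : ℝ[X]) (k : ℕ) :
    iteratedDeriv k (fun x => p.eval x) = fun x => (derivative^[k] p).eval x := by
  induction k with
  | zero => simp
  | succ k ih =>
    ext x
    rw [iteratedDeriv_succ, ih, Function.iterate_succ_apply', Polynomial.deriv]

theorem hasDerivAt_sin_pow_succ_mul_eval_cos (p : ℝ[X]) (k : ℕ) (θ : ℝ) :
    HasDerivAt (fun θ => sin θ ^ (k + 1) * p.eval (cos θ))
      (sin θ ^ k * ((k + 1) * cos θ * p.eval (cos θ) +
        (cos θ ^ 2 - 1) * (derivative p).eval (cos θ))) θ := by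
  have hp := (p.hasDerivAt (cos θ)).comp θ (hasDerivAt_cos θ)
  refine (((hasDerivAt_sin θ).fun_pow (k + 1)).fun_mul hp).congr_deriv ?_
  simp only [add_tsub_cancel_right, Nat.cast_add, Nat.cast_one, Function.comp_apply]
  linear_combination (-(sin θ ^ k * (derivative p).eval (cos θ))) * sin_sq_add_cos_sq θ

noncomputable def legendreNorm (l m : ℕ) : ℝ :=
  √((2 * l + 1) / (4 * π)) * √((l - m).factorial / (l + m).factorial) / (2 ^ l * l.factorial)

/-- On `[0, π]` this is `2 ^ l * l! * P_{lm}(cos θ)`, by Rodrigues' formula. -/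
noncomputable def legendreTrig (l m : ℕ) (θ : ℝ) : ℝ :=
  sin θ ^ m * (derivative^[l + m] ((X ^ 2 - 1 : ℝ[X]) ^ l)).eval (cos θ)

theorem continuous_legendreTrig (l m : ℕ) : Continuous (legendreTrig l m) := by
  unfold legendreTrig
  fun_prop

theorem legendreTrig_eq_zero {l m : ℕ} (h : l < m) (θ : ℝ) : legendreTrig l m θ = 0 := by
  rw [legendreTrig, iterate_derivative_X_sq_sub_one_pow_eq_zero (by omega), eval_zero, mul_zero]

theorem Xlm_eq_legendreTrig (l m : ℕ) {θ : ℝ} (hθ : θ ∈ Icc 0 π) :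
    Xlm l m θ = (-1) ^ m * legendreNorm l m * legendreTrig l m θ := by
  rcases lt_or_ge l m with hlm | hml
  · rw [legendreTrig_eq_zero hlm, mul_zero, Xlm, if_neg (by omega)]
  have hsin : (1 - cos θ ^ 2) ^ ((m : ℝ) / 2) = sin θ ^ m := by
    rw [← sin_sq, ← rpow_natCast, ← rpow_mul (sin_nonneg_of_nonneg_of_le_pi hθ.1 hθ.2),
      ← rpow_natCast]
    congr 1
    push_cast
    ring
  have hpoly : (fun t : ℝ => (t ^ 2 - 1) ^ l) = fun t => ((X ^ 2 - 1 : ℝ[X]) ^ l).eval t := by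
    simp
  rw [Xlm, if_pos (by omega), Int.toNat_natCast, legendreP, hsin, hpoly,
    Polynomial.iteratedDeriv_eval, legendreNorm, legendreTrig]
  ring

theorem hasDerivAt_sin_sq_mul_legendreTrig (n m : ℕ) (θ : ℝ) :
    HasDerivAt
      (fun θ => 2 * ((n : ℝ) + 2) * (2 * n + 3) * (sin θ ^ 2 * legendreTrig (n + 1) m θ))
      (((n : ℝ) + 2 - m) * (n + 3) * (legendreTrig (n + 2) m θ * sin θ) -
        4 * ((n : ℝ) + 2) * (n + 1) * n * (n + m + 1) * (legendreTrig n m θ * sin θ)) θ := by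
  have hpoly := congrArg (eval (cos θ))
    (iterate_derivative_X_sq_sub_one_pow_three_term (R := ℝ) n m)
  simp only [eval_mul, eval_add, eval_sub, eval_natCast, eval_X, eval_pow, eval_one,
    eval_ofNat] at hpoly
  have h := (hasDerivAt_sin_pow_succ_mul_eval_cos
    (derivative^[n + m + 1] ((X ^ 2 - 1 : ℝ[X]) ^ (n + 1))) (m + 1) θ).const_mul
    (2 * ((n : ℝ) + 2) * (2 * n + 3))
  simp only [legendreTrig, ← Function.iterate_succ_apply' derivative,
    show n + 1 + m = n + m + 1 by omega, show n + 2 + m = n + m + 2 by omega] at h ⊢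
  refine (h.congr_of_eventuallyEq (.of_forall fun θ => by ring)).congr_deriv ?_
  push_cast
  linear_combination (sin θ ^ (m + 1)) * hpoly

theorem integral_legendreTrig_recursion (n m : ℕ) (Θ : ℝ) :
    ((n : ℝ) + 2 - m) * (n + 3) * (∫ θ in 0..Θ, legendreTrig (n + 2) m θ * sin θ) -
        4 * ((n : ℝ) + 2) * (n + 1) * n * (n + m + 1) *
          (∫ θ in 0..Θ, legendreTrig n m θ * sin θ) =
      2 * ((n : ℝ) + 2) * (2 * n + 3) * (sin Θ ^ 2 * legendreTrig (n + 1) m Θ) := by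
  have hcont (l : ℕ) : Continuous fun θ => legendreTrig l m θ * sin θ :=
    (continuous_legendreTrig l m).mul continuous_sin
  rw [← intervalIntegral.integral_const_mul, ← intervalIntegral.integral_const_mul,
    ← integral_sub ((hcont _).const_mul _ |>.intervalIntegrable _ _)
      ((hcont _).const_mul _ |>.intervalIntegrable _ _),
    integral_eq_sub_of_hasDerivAt (fun θ _ => hasDerivAt_sin_sq_mul_legendreTrig n m θ)]
  · simp
  · refine Continuous.intervalIntegrable ?_ _ _
    fun_prop

theorem Ilm_eq_integral_legendreTrig (l m : ℕ) {Θ : ℝ} (hΘ : Θ ∈ Icc 0 π) :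
    Ilm l m Θ = (-1) ^ m * legendreNorm l m * ∫ θ in 0..Θ, legendreTrig l m θ * sin θ := by
  rw [Ilm, ← intervalIntegral.integral_const_mul]
  refine integral_congr fun θ hθ => ?_
  rw [uIcc_of_le hΘ.1] at hθ
  simp only [Xlm_eq_legendreTrig l m ⟨hθ.1, hθ.2.trans hΘ.2⟩]
  ring

theorem legendreNorm_nonneg (l m : ℕ) : 0 ≤ legendreNorm l m := by
  unfold legendreNorm
  positivity

theorem legendreNorm_sq (l m : ℕ) :
    legendreNorm l m ^ 2 =
      (2 * l + 1) / (4 * π) * ((l - m).factorial / (l + m).factorial) /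
        (2 ^ l * l.factorial) ^ 2 := by
  rw [legendreNorm, div_pow, mul_pow, sq_sqrt (by positivity), sq_sqrt (by positivity)]

theorem legendreNorm_succ_sq {k m : ℕ} (hm : m ≤ k) :
    legendreNorm (k + 1) m ^ 2 =
      (2 * k + 3) * (k + 1 - m) / (4 * ((k : ℝ) + 1) ^ 2 * (2 * k + 1) * (k + 1 + m)) *
        legendreNorm k m ^ 2 := by
  have hsub : (k + 1 - m).factorial = (k + 1 - m) * (k - m).factorial := by
    rw [show k + 1 - m = k - m + 1 by omega, Nat.factorial_succ]
  have hadd : (k + 1 + m).factorial = (k + 1 + m) * (k + m).factorial := by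
    rw [show k + 1 + m = k + m + 1 by omega, Nat.factorial_succ]
  rw [legendreNorm_sq, legendreNorm_sq, hsub, hadd, Nat.factorial_succ]
  push_cast [hm, show m ≤ k + 1 by omega]
  field_simp
  ring

theorem sqrt_mul_legendreNorm_pred {l m : ℕ} (hm : m < l) :
    ((l : ℝ) - m) * √((4 * (l : ℝ) ^ 2 - 1) / ((l : ℝ) ^ 2 - (m : ℝ) ^ 2)) *
        legendreNorm (l - 1) m =
      2 * l * (2 * l - 1) * legendreNorm l m := by
  obtain ⟨k, rfl⟩ : ∃ k, l = k + 1 := ⟨l - 1, by omega⟩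
  have hmk : (m : ℝ) ≤ k := by exact_mod_cast Nat.lt_succ_iff.mp hm
  rw [add_tsub_cancel_right, ← pow_left_inj₀ _ _ two_ne_zero]
  · simp only [mul_pow]
    rw [sq_sqrt, legendreNorm_succ_sq (Nat.lt_succ_iff.mp hm)]
    · push_cast
      have : ((k : ℝ) + 1) ^ 2 - m ^ 2 ≠ 0 := by nlinarith
      field_simp
      ring
    · apply div_nonneg <;> push_cast <;> nlinarith
  · exact mul_nonneg (mul_nonneg (by push_cast; linarith) (sqrt_nonneg _))
      (legendreNorm_nonneg _ _)
  · exact mul_nonneg (by push_cast; nlinarith) (legendreNorm_nonneg _ _)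

theorem sqrt_mul_legendreNorm_pred_pred {l m : ℕ} (hm : m + 2 ≤ l) :
    ((l : ℝ) - m) * √((2 * (l : ℝ) + 1) * (((l : ℝ) - 1) ^ 2 - (m : ℝ) ^ 2) /
        ((2 * (l : ℝ) - 3) * ((l : ℝ) ^ 2 - (m : ℝ) ^ 2))) * legendreNorm (l - 2) m =
      4 * l * (l - 1) * (l + m - 1) * legendreNorm l m := by
  obtain ⟨k, rfl⟩ : ∃ k, l = k + 2 := ⟨l - 2, by omega⟩
  have hmk : (m : ℝ) ≤ k := by exact_mod_cast (show m ≤ k by omega)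
  rw [add_tsub_cancel_right, ← pow_left_inj₀ _ _ two_ne_zero]
  · simp only [mul_pow]
    rw [sq_sqrt, legendreNorm_succ_sq (k := k + 1) (by omega), legendreNorm_succ_sq (by omega)]
    · push_cast
      have : ((k : ℝ) + 2) ^ 2 - m ^ 2 ≠ 0 := by nlinarith
      have : (2 * ((k : ℝ) + 2) - 3) ≠ 0 := by linarith
      field_simp
      ring
    · apply div_nonneg <;> push_cast <;> apply mul_nonneg <;> nlinarith
  · exact mul_nonneg (mul_nonneg (by push_cast; linarith) (sqrt_nonneg _))
      (legendreNorm_nonneg _ _)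
  · push_cast
    exact mul_nonneg (mul_nonneg (by nlinarith) (by linarith)) (legendreNorm_nonneg _ _)

/-- Paul's recursion for `l ≥ 2` and `0 ≤ m < l`. -/
theorem Ilm_recursion (l : ℕ) (m : ℤ) (hl : 2 ≤ l) (hm0 : 0 ≤ m) (hml : m < (l : ℤ))
    (Θ : ℝ) (hΘ : Θ ∈ Set.Icc 0 Real.pi) :
    Ilm l m Θ =
      (((l : ℝ) - 2) / ((l : ℝ) + 1)) *
          Real.sqrt ((2 * (l : ℝ) + 1) * (((l : ℝ) - 1) ^ 2 - (m : ℝ) ^ 2) /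
            ((2 * (l : ℝ) - 3) * ((l : ℝ) ^ 2 - (m : ℝ) ^ 2))) * Ilm (l - 2) m Θ +
        (1 / ((l : ℝ) + 1)) *
          Real.sqrt ((4 * (l : ℝ) ^ 2 - 1) / ((l : ℝ) ^ 2 - (m : ℝ) ^ 2)) *
          (Real.sin Θ) ^ 2 * Xlm (l - 1) m Θ := by
  obtain ⟨k, rfl⟩ := Int.eq_ofNat_of_zero_le hm0
  have hkl : k < l := by exact_mod_cast hml
  have hC2 := sqrt_mul_legendreNorm_pred hkl
  obtain ⟨n, rfl⟩ : ∃ n, l = n + 2 := ⟨l - 2, by omega⟩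
  have hrec := integral_legendreTrig_recursion n k Θ
  have hk : (k : ℝ) < n + 2 := by exact_mod_cast hkl
  rw [Ilm_eq_integral_legendreTrig _ _ hΘ, Ilm_eq_integral_legendreTrig _ _ hΘ,
    Xlm_eq_legendreTrig _ _ hΘ]
  simp only [Nat.add_sub_cancel, show n + 2 - 1 = n + 1 from rfl, Int.cast_natCast] at hC2 ⊢
  simp only [div_mul_eq_mul_div, ← add_div]
  push_cast at hC2 hrec ⊢
  rw [eq_div_iff (by positivity)]
  apply mul_left_cancel₀ (sub_ne_zero.2 hk.ne')
  rcases Nat.lt_or_ge n k with hnk | hkn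
  · have hJ : ∫ θ in 0..Θ, legendreTrig n k θ * sin θ = 0 := by
      simp [legendreTrig_eq_zero hnk]
    rw [hJ] at hrec ⊢
    linear_combination (-1) ^ k * (legendreNorm (n + 2) k * hrec -
      sin Θ ^ 2 * legendreTrig (n + 1) k Θ * hC2)
  · have hC1 := sqrt_mul_legendreNorm_pred_pred (show k + 2 ≤ n + 2 by omega)
    simp only [Nat.add_sub_cancel] at hC1
    push_cast at hC1
    linear_combination (-1) ^ k * (legendreNorm (n + 2) k * hrec -
      n * (∫ θ in 0..Θ, legendreTrig n k θ * sin θ) * hC1 -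
      sin Θ ^ 2 * legendreTrig (n + 1) k Θ * hC2)
end

section
/- Define I_{lm}(Θ) = ∫₀^Θ X_{lm}(θ) sin θ dθ. Then for l ≥ 2 and m = l, I_{ll}(Θ) = (1/(l+1)) √((2l+1)/(4l²-4l)) [ l√(2l-1) I_{l-2,l-2}(Θ) − sin²Θ · X_{l-1,l-2}(Θ) ]. -/
open MeasureTheory intervalIntegral

/-! For `0 ≤ θ ≤ π` the sectoral functions are pure powers of `sin θ`: the `2l`-th derivative of
`(x² - 1)^l` is the constant `(2l)!`, so `X_{ll}(θ) = c_l sin^l θ`, and the `(2l+1)`-th derivative of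
`(x² - 1)^(l+1)` is linear, so `X_{l+1,l}(θ) = √(2l+3) cos θ X_{ll}(θ)`. The recursion is then the reduction
formula `∫ sin^(n+2) = (n+1)/(n+2) ∫ sin^n - sin^(n+1) cos / (n+2)` combined with the ratio `c_l / c_{l-2}`. -/

open Polynomial Real
open scoped Nat

namespace Polynomial

theorem iteratedDeriv_eval_s3 (p : ℝ[X]) (n : ℕ) :
    iteratedDeriv n (fun t => p.eval t) = fun t => (derivative^[n] p).eval t := by
  induction n generalizing p with
  | zero => simp
  | succ n ih =>
    rw [iteratedDeriv_succ', Function.iterate_succ_apply, ← ih]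
    congr 1
    funext x
    exact p.deriv

theorem X_sq_sub_one_pow_eq_sum {R : Type*} [CommRing R] (n : ℕ) :
    (X ^ 2 - 1 : R[X]) ^ n =
      ∑ k ∈ Finset.range (n + 1), C ((-1 : R) ^ (n - k) * n.choose k) * X ^ (2 * k) := by
  rw [sub_eq_add_neg, add_pow]
  refine Finset.sum_congr rfl fun k _ => ?_
  rw [C_mul, C_pow, C_neg, C_1, map_natCast, pow_mul]
  ring

theorem iterate_derivative_X_sq_sub_one_pow {R : Type*} [CommRing R] {n m : ℕ}
    (h : 2 * n ≤ m + 1) :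
    derivative^[m] ((X ^ 2 - 1 : R[X]) ^ n) = C ((2 * n).descFactorial m : R) * X ^ (2 * n - m) := by
  rw [X_sq_sub_one_pow_eq_sum, iterate_derivative_sum, Finset.sum_eq_single n]
  · simp [iterate_derivative_X_pow_eq_C_mul]
  · intro k hk hkn
    have hlt : 2 * k < m := by have := Finset.mem_range.mp hk; omega
    rw [iterate_derivative_C_mul, iterate_derivative_X_pow_eq_C_mul,
      Nat.descFactorial_eq_zero_iff_lt.mpr hlt]
    simp
  · simp

end Polynomial

theorem sq_rpow_natCast_div_two {x : ℝ} (hx : 0 ≤ x) (n : ℕ) : (x ^ 2) ^ ((n : ℝ) / 2) = x ^ n := by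
  rw [← Real.rpow_natCast x 2, ← Real.rpow_mul hx, Nat.cast_ofNat, mul_div_cancel₀ _ two_ne_zero,
    Real.rpow_natCast]

theorem iteratedDeriv_sq_sub_one_pow {n m : ℕ} (h : 2 * n ≤ m + 1) (x : ℝ) :
    iteratedDeriv m (fun t : ℝ => (t ^ 2 - 1) ^ n) x = (2 * n).descFactorial m * x ^ (2 * n - m) := by
  have hp : (fun t : ℝ => (t ^ 2 - 1) ^ n) = fun t => ((X ^ 2 - 1 : ℝ[X]) ^ n).eval t := by
    funext t; simp
  rw [hp, iteratedDeriv_eval_s3, iterate_derivative_X_sq_sub_one_pow h]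
  simp

theorem legendreP_self (l : ℕ) (x : ℝ) :
    legendreP l l x = (2 * l)! / (2 ^ l * l !) * (1 - x ^ 2) ^ ((l : ℝ) / 2) := by
  rw [legendreP, ← two_mul, iteratedDeriv_sq_sub_one_pow (by omega), Nat.descFactorial_self]
  simp
  ring

theorem legendreP_succ_self (k : ℕ) (x : ℝ) :
    legendreP (k + 1) k x = (2 * k + 1) * x * legendreP k k x := by
  rw [legendreP_self, legendreP, iteratedDeriv_sq_sub_one_pow (by omega),
    show 2 * (k + 1) - (k + 1 + k) = 1 by omega, show k + 1 + k = 2 * k + 1 by omega]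
  have hdesc : (2 * (k + 1)).descFactorial (2 * k + 1) = (2 * k + 2)! := by
    have h := Nat.factorial_mul_descFactorial (show 2 * k + 1 ≤ 2 * (k + 1) by omega)
    rwa [show 2 * (k + 1) - (2 * k + 1) = 1 by omega, Nat.factorial_one, one_mul] at h
  rw [hdesc]
  push_cast [Nat.factorial_succ, show 2 * k + 2 = (2 * k + 1) + 1 by omega]
  field_simp
  ring

noncomputable def sectoralCoeff (l : ℕ) : ℝ :=
  (-1) ^ l * √((2 * l + 1) / (4 * π)) * √((2 * l)! : ℝ) / (2 ^ l * l !)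

theorem Xlm_self {l : ℕ} {θ : ℝ} (hθ : 0 ≤ sin θ) : Xlm l l θ = sectoralCoeff l * sin θ ^ l := by
  have hF : (0 : ℝ) < (2 * l)! := by positivity
  rw [Xlm, if_pos ⟨Int.natCast_nonneg l, le_rfl⟩, Int.toNat_natCast, legendreP_self, ← sin_sq,
    sq_rpow_natCast_div_two hθ, Nat.sub_self, ← two_mul, sectoralCoeff, Nat.factorial_zero, Nat.cast_one, one_div, Real.sqrt_inv]
  field_simp
  rw [Real.sq_sqrt hF.le]

theorem Xlm_succ_self (k : ℕ) (θ : ℝ) : Xlm (k + 1) k θ = √(2 * k + 3) * cos θ * Xlm k k θ := by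
  have hk : (0 : ℤ) ≤ k ∧ (k : ℤ) ≤ (k + 1 : ℕ) := by omega
  rw [Xlm, Xlm, if_pos hk, if_pos ⟨Int.natCast_nonneg k, le_rfl⟩, Int.toNat_natCast,
    legendreP_succ_self, Nat.sub_self, Nat.add_sub_cancel_left, ← two_mul,
    show k + 1 + k = 2 * k + 1 by omega]
  have hconst : √((2 * ((k + 1 : ℕ) : ℝ) + 1) / (4 * π)) * √((1 ! : ℝ) / (2 * k + 1)!) * (2 * k + 1) =
      √(2 * k + 3) * √((2 * k + 1) / (4 * π)) * √((0 ! : ℝ) / (2 * k)!) := by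
    refine (pow_left_inj₀ (by positivity) (by positivity) two_ne_zero).mp ?_
    rw [mul_pow, mul_pow, mul_pow, mul_pow, Real.sq_sqrt (by positivity), Real.sq_sqrt (by positivity),
      Real.sq_sqrt (by positivity), Real.sq_sqrt (by positivity), Real.sq_sqrt (by positivity)]
    push_cast [Nat.factorial_succ]
    field_simp
    ring
  linear_combination (-1 : ℝ) ^ k * cos θ * legendreP k k (cos θ) * hconst

theorem sectoralCoeff_eq {l : ℕ} (hl : 2 ≤ l) :
    sectoralCoeff l = √((2 * l + 1) / (4 * l ^ 2 - 4 * l)) * √(2 * l - 1) * sectoralCoeff (l - 2) := by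
  obtain ⟨k, rfl⟩ := Nat.exists_eq_add_of_le' hl
  rw [Nat.add_sub_cancel, sectoralCoeff, sectoralCoeff]
  have habs : √((2 * ((k + 2 : ℕ) : ℝ) + 1) / (4 * π)) * √((2 * (k + 2))! : ℝ) / (2 ^ (k + 2) * (k + 2)!) =
      √((2 * ((k + 2 : ℕ) : ℝ) + 1) / (4 * ((k + 2 : ℕ) : ℝ) ^ 2 - 4 * (k + 2 : ℕ))) *
        √(2 * ((k + 2 : ℕ) : ℝ) - 1) * (√((2 * k + 1) / (4 * π)) * √((2 * k)! : ℝ) / (2 ^ k * k !)) := by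
    refine (pow_left_inj₀ (by positivity) (by positivity) two_ne_zero).mp ?_
    have hodd : (0 : ℝ) ≤ 2 * ((k + 2 : ℕ) : ℝ) - 1 := by push_cast; linarith
    have hK : (0 : ℝ) ≤ (2 * ((k + 2 : ℕ) : ℝ) + 1) / (4 * ((k + 2 : ℕ) : ℝ) ^ 2 - 4 * (k + 2 : ℕ)) :=
      div_nonneg (by positivity) (by push_cast; nlinarith)
    simp only [div_pow, mul_pow]
    rw [Real.sq_sqrt hodd, Real.sq_sqrt hK, Real.sq_sqrt (by positivity),
      Real.sq_sqrt (by positivity), Real.sq_sqrt (by positivity), Real.sq_sqrt (by positivity)]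
    push_cast [show 2 * (k + 2) = 2 * k + 1 + 1 + 1 + 1 by ring, Nat.factorial_succ]
    rw [show 4 * ((k : ℝ) + 2) ^ 2 - 4 * ((k : ℝ) + 2) = 4 * ((k : ℝ) + 2) * ((k : ℝ) + 1) by ring]
    field_simp
    ring
  rw [pow_add]
  linear_combination (-1 : ℝ) ^ k * habs

theorem Ilm_self {l : ℕ} {Θ : ℝ} (hΘ : Θ ∈ Set.Icc 0 π) :
    Ilm l l Θ = sectoralCoeff l * ∫ θ in (0 : ℝ)..Θ, sin θ ^ (l + 1) := by
  rw [Ilm, ← intervalIntegral.integral_const_mul]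
  refine integral_congr fun θ hθ => ?_
  rw [Set.uIcc_of_le hΘ.1] at hθ
  rw [Xlm_self (sin_nonneg_of_nonneg_of_le_pi hθ.1 (hθ.2.trans hΘ.2))]
  ring

/-- Paul's recursion for the sectoral case `m = l`, `l ≥ 2`. -/
theorem Ill_recursion (l : ℕ) (hl : 2 ≤ l) (Θ : ℝ) (hΘ : Θ ∈ Set.Icc 0 Real.pi) :
    Ilm l (l : ℤ) Θ =
      (1 / ((l : ℝ) + 1)) *
        Real.sqrt ((2 * (l : ℝ) + 1) / (4 * (l : ℝ) ^ 2 - 4 * (l : ℝ))) *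
        ((l : ℝ) * Real.sqrt (2 * (l : ℝ) - 1) * Ilm (l - 2) ((l : ℤ) - 2) Θ -
          (Real.sin Θ) ^ 2 * Xlm (l - 1) ((l : ℤ) - 2) Θ) := by
  rw [Ilm_self hΘ, sectoralCoeff_eq hl]
  obtain ⟨k, rfl⟩ := Nat.exists_eq_add_of_le' hl
  have hsin : 0 ≤ sin Θ := sin_nonneg_of_nonneg_of_le_pi hΘ.1 hΘ.2
  have hodd : 2 * ((k + 2 : ℕ) : ℝ) - 1 = 2 * k + 3 := by push_cast; ring
  rw [show ((k + 2 : ℕ) : ℤ) - 2 = k by push_cast; ring, Nat.add_sub_cancel,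
    show k + 2 - 1 = k + 1 by omega, Ilm_self hΘ, Xlm_succ_self, Xlm_self hsin,
    show k + 2 + 1 = k + 1 + 2 by ring, integral_sin_pow, hodd]
  push_cast
  simp only [sin_zero, cos_zero]
  field_simp
  ring
end

section
/- For an axisymmetric polar cap of radius Θ, the cross matrix element between tangential harmonics is D_{lm,l'm'} = −2π δ_{−m,m'} m X_{lm}(Θ) X_{l'm}(Θ) / √(l(l+1) l'(l'+1)); in particular D_{lm,l'm'} = 0 whenever m' ≠ −m, and D vanishes identically on the order-0 block. -/
open MeasureTheory intervalIntegral

/-- Real scalar spherical harmonic `Y_{lm}(θ,φ)` (real convention of the paper). -/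
noncomputable def Ysph (l : ℕ) (m : ℤ) (θ φ : ℝ) : ℝ :=
  if m < 0 then Real.sqrt 2 * Xlm l |m| θ * Real.cos ((m : ℝ) * φ)
  else if m = 0 then Xlm l 0 θ
  else Real.sqrt 2 * Xlm l m θ * Real.sin ((m : ℝ) * φ)

/-- Radial vector spherical harmonic `P_{lm} = r̂ Y_{lm}`, expressed by its
components in the orthonormal frame `(r̂, θ̂, φ̂)`. -/
noncomputable def Pv (l : ℕ) (m : ℤ) (θ φ : ℝ) : Fin 3 → ℝ :=
  ![Ysph l m θ φ, 0, 0]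

/-- Tangential vector spherical harmonic `B_{lm} = ∇₁Y_{lm}/√(l(l+1))`,
components in the frame `(r̂, θ̂, φ̂)`. -/
noncomputable def Bv (l : ℕ) (m : ℤ) (θ φ : ℝ) : Fin 3 → ℝ :=
  (Real.sqrt ((l : ℝ) * ((l : ℝ) + 1)))⁻¹ •
    ![0, deriv (fun t => Ysph l m t φ) θ,
      (Real.sin θ)⁻¹ * deriv (fun p => Ysph l m θ p) φ]

/-- Tangential vector spherical harmonic `C_{lm} = -r̂ × ∇₁Y_{lm}/√(l(l+1))`,
components in the frame `(r̂, θ̂, φ̂)`. -/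
noncomputable def Cv (l : ℕ) (m : ℤ) (θ φ : ℝ) : Fin 3 → ℝ :=
  (Real.sqrt ((l : ℝ) * ((l : ℝ) + 1)))⁻¹ •
    ![0, (Real.sin θ)⁻¹ * deriv (fun p => Ysph l m θ p) φ,
      -deriv (fun t => Ysph l m t φ) θ]

/-- Euclidean dot product of the `(r̂, θ̂, φ̂)`-components. -/
noncomputable def dot3 (u v : Fin 3 → ℝ) : ℝ := ∑ i, u i * v i

/-- Integral over the whole unit sphere, `∫_Ω f dΩ`, in spherical coordinates. -/
noncomputable def sphereInt (f : ℝ → ℝ → ℝ) : ℝ :=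
  ∫ θ in (0 : ℝ)..Real.pi, ∫ φ in (0 : ℝ)..(2 * Real.pi), f θ φ * Real.sin θ

/-- Integral over a region `R ⊆ Ω`, `∫_R f dΩ`, with `R` given in spherical
coordinates `(θ, φ)`. -/
noncomputable def regionInt (R : Set (ℝ × ℝ)) (f : ℝ → ℝ → ℝ) : ℝ :=
  ∫ p in R, f p.1 p.2 * Real.sin p.1

/-!
Write `Y_{lm}(θ, φ) = X_{l|m|}(θ) g_m(φ)`. The azimuthal factors satisfy
`∫₀^{2π} g_a g_b = 2π δ_{ab}` and `g_m' = m g_{-m}`, so the `φ`-integral of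
`B_{lm} · C_{l'm'} sin θ` vanishes unless `m' = -m`, and then equals
`-2πm / √(l(l+1) l'(l'+1))` times `d/dθ (X_{l|m|} X_{l'|m|})`. Each factor carries
`|sin θ|^{|m|}`, but their product is `sin^{2|m|} θ` times a polynomial in `cos θ`, hence
smooth, so the `θ`-integral is a boundary term; at `θ = 0` it vanishes for `m ≠ 0`. The factor
`(sin θ)⁻¹ sin θ` hidden in the integrand equals `1` off the null set `sin θ = 0`.
-/

open Real
open scoped ContDiff

lemma integral_cos_int_mul (k : ℤ) :
    ∫ x in (0 : ℝ)..2 * π, cos (k * x) = if k = 0 then 2 * π else 0 := by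
  split_ifs with hk
  · simp [hk]
  · have hk' : (k : ℝ) ≠ 0 := by exact_mod_cast hk
    rw [integral_comp_mul_left (fun x => cos x) hk', integral_cos, mul_zero, sin_zero,
      show (k : ℝ) * (2 * π) = (2 * k : ℤ) * π by push_cast; ring, sin_int_mul_pi]
    simp

lemma integral_sin_int_mul (k : ℤ) : ∫ x in (0 : ℝ)..2 * π, sin (k * x) = 0 := by
  rcases eq_or_ne k 0 with hk | hk
  · simp [hk]
  · have hk' : (k : ℝ) ≠ 0 := by exact_mod_cast hk
    rw [integral_comp_mul_left (fun x => sin x) hk', integral_sin, mul_zero, cos_zero,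
      cos_int_mul_two_pi]
    simp

lemma integral_cos_mul_cos_int (a b : ℤ) :
    ∫ x in (0 : ℝ)..2 * π, cos (a * x) * cos (b * x) =
      (if a = b then π else 0) + if a = -b then π else 0 := by
  have h (x : ℝ) : cos (a * x) * cos (b * x) =
      cos ((a - b : ℤ) * x) / 2 + cos ((a + b : ℤ) * x) / 2 := by
    push_cast; rw [sub_mul, add_mul, cos_sub, cos_add]; ring
  simp_rw [h]
  rw [intervalIntegral.integral_add (Continuous.intervalIntegrable (by fun_prop) _ _)
      (Continuous.intervalIntegrable (by fun_prop) _ _), intervalIntegral.integral_div,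
    intervalIntegral.integral_div, integral_cos_int_mul, integral_cos_int_mul]
  simp only [sub_eq_zero, add_eq_zero_iff_eq_neg]
  split_ifs <;> ring

lemma integral_sin_mul_sin_int (a b : ℤ) :
    ∫ x in (0 : ℝ)..2 * π, sin (a * x) * sin (b * x) =
      (if a = b then π else 0) - if a = -b then π else 0 := by
  have h (x : ℝ) : sin (a * x) * sin (b * x) =
      cos ((a - b : ℤ) * x) / 2 - cos ((a + b : ℤ) * x) / 2 := by
    push_cast; rw [sub_mul, add_mul, cos_sub, cos_add]; ring
  simp_rw [h]
  rw [intervalIntegral.integral_sub (Continuous.intervalIntegrable (by fun_prop) _ _)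
      (Continuous.intervalIntegrable (by fun_prop) _ _), intervalIntegral.integral_div,
    intervalIntegral.integral_div, integral_cos_int_mul, integral_cos_int_mul]
  simp only [sub_eq_zero, add_eq_zero_iff_eq_neg]
  split_ifs <;> ring

lemma integral_sin_mul_cos_int (a b : ℤ) :
    ∫ x in (0 : ℝ)..2 * π, sin (a * x) * cos (b * x) = 0 := by
  have h (x : ℝ) : sin (a * x) * cos (b * x) =
      sin ((a + b : ℤ) * x) / 2 + sin ((a - b : ℤ) * x) / 2 := by
    push_cast; rw [sub_mul, add_mul, sin_sub, sin_add]; ring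
  simp_rw [h]
  rw [intervalIntegral.integral_add (Continuous.intervalIntegrable (by fun_prop) _ _)
      (Continuous.intervalIntegrable (by fun_prop) _ _), intervalIntegral.integral_div,
    intervalIntegral.integral_div, integral_sin_int_mul, integral_sin_int_mul]
  norm_num

noncomputable def azimuthal (m : ℤ) (φ : ℝ) : ℝ :=
  if m < 0 then √2 * cos (m * φ) else if m = 0 then 1 else √2 * sin (m * φ)

lemma integral_azimuthal_mul_azimuthal (a b : ℤ) :
    ∫ φ in (0 : ℝ)..2 * π, azimuthal a φ * azimuthal b φ = if a = b then 2 * π else 0 := by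
  have hs (u v : ℝ) : √2 * u * (√2 * v) = 2 * (u * v) := by
    rw [mul_mul_mul_comm, Real.mul_self_sqrt zero_le_two]
  rcases lt_trichotomy a 0 with ha | ha | ha <;> rcases lt_trichotomy b 0 with hb | hb | hb <;>
    simp (disch := omega) only [azimuthal, if_pos, if_neg, hs, one_mul, mul_one, mul_zero,
      sub_zero, smul_eq_mul, mul_comm (cos _) (sin _), intervalIntegral.integral_const_mul,
      intervalIntegral.integral_const, integral_cos_int_mul, integral_sin_int_mul,
      integral_cos_mul_cos_int, integral_sin_mul_sin_int, integral_sin_mul_cos_int]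
  all_goals split_ifs <;> first | omega | ring

lemma hasDerivAt_azimuthal (m : ℤ) (φ : ℝ) :
    HasDerivAt (azimuthal m) (m * azimuthal (-m) φ) φ := by
  have hmul : HasDerivAt (fun x : ℝ => (m : ℝ) * x) m φ := by
    simpa using (hasDerivAt_id φ).const_mul (m : ℝ)
  unfold azimuthal
  rcases lt_trichotomy m 0 with hm | hm | hm
  · simp (disch := omega) only [if_pos, if_neg]
    refine (hmul.cos.const_mul √2).congr_deriv ?_
    push_cast; simp only [neg_mul, sin_neg]; ring
  · subst hm; simpa using hasDerivAt_const φ (1 : ℝ)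
  · simp (disch := omega) only [if_pos, if_neg]
    refine (hmul.sin.const_mul √2).congr_deriv ?_
    push_cast; simp only [neg_mul, cos_neg]; ring

lemma continuous_azimuthal (m : ℤ) : Continuous (azimuthal m) :=
  continuous_iff_continuousAt.2 fun φ => (hasDerivAt_azimuthal m φ).continuousAt

lemma Ysph_eq_Xlm_mul_azimuthal (l : ℕ) (m : ℤ) (θ φ : ℝ) :
    Ysph l m θ φ = Xlm l |m| θ * azimuthal m φ := by
  rcases lt_trichotomy m 0 with hm | hm | hm
  · simp (disch := omega) only [Ysph, azimuthal, if_pos]; ring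
  · simp [Ysph, azimuthal, hm]
  · simp (disch := omega) only [Ysph, azimuthal, if_neg]; rw [abs_of_pos hm]; ring

lemma deriv_Ysph_polar (l : ℕ) (m : ℤ) (θ φ : ℝ) :
    deriv (fun t => Ysph l m t φ) θ = deriv (Xlm l |m|) θ * azimuthal m φ := by
  simp_rw [Ysph_eq_Xlm_mul_azimuthal]
  exact deriv_mul_const_field _

lemma deriv_Ysph_azimuthal (l : ℕ) (m : ℤ) (θ φ : ℝ) :
    deriv (fun p => Ysph l m θ p) φ = Xlm l |m| θ * (m * azimuthal (-m) φ) := by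
  simp_rw [Ysph_eq_Xlm_mul_azimuthal]
  rw [deriv_const_mul_field, (hasDerivAt_azimuthal m φ).deriv]

lemma legendreP_cos (l n : ℕ) (θ : ℝ) :
    legendreP l n (cos θ) = (2 ^ l * l.factorial : ℝ)⁻¹ *
      (|sin θ| ^ n * iteratedDeriv (l + n) (fun t : ℝ => (t ^ 2 - 1) ^ l) (cos θ)) := by
  rw [legendreP, ← sin_sq, rpow_div_two_eq_sqrt _ (sq_nonneg _), sqrt_sq_eq_abs, rpow_natCast]
  ring

lemma exists_Xlm_eq (l : ℕ) (a : ℤ) :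
    ∃ c : ℝ, ∀ θ, Xlm l a θ = c * (|sin θ| ^ a.toNat *
      iteratedDeriv (l + a.toNat) (fun t : ℝ => (t ^ 2 - 1) ^ l) (cos θ)) := by
  by_cases ha : 0 ≤ a ∧ a ≤ l
  · exact ⟨_, fun θ => by rw [Xlm, if_pos ha, legendreP_cos, ← mul_assoc]⟩
  · exact ⟨0, fun θ => by rw [Xlm, if_neg ha, zero_mul]⟩

lemma contDiff_iteratedDeriv_pow (l k : ℕ) :
    ContDiff ℝ ∞ (iteratedDeriv k fun t : ℝ => (t ^ 2 - 1) ^ l) := by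
  rw [iteratedDeriv_eq_iterate]
  exact ContDiff.iterate_deriv k (by fun_prop)

lemma Xlm_zero_of_pos (l : ℕ) {a : ℤ} (ha : 0 < a) : Xlm l a 0 = 0 := by
  obtain ⟨c, hc⟩ := exists_Xlm_eq l a
  rw [hc, sin_zero, abs_zero, zero_pow (by omega), zero_mul, mul_zero]

lemma differentiableAt_Xlm (l : ℕ) (a : ℤ) {θ : ℝ} (hθ : sin θ ≠ 0) :
    DifferentiableAt ℝ (Xlm l a) θ := by
  obtain ⟨c, hc⟩ := exists_Xlm_eq l a
  rw [funext hc]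
  have hD := (contDiff_iteratedDeriv_pow l (l + a.toNat)).differentiable (by simp)
  exact (((differentiableAt_sin.abs hθ).pow _).mul
    ((hD _).comp θ differentiableAt_cos)).const_mul c

lemma contDiff_Xlm_mul_Xlm (l l' : ℕ) (a : ℤ) :
    ContDiff ℝ ∞ fun θ => Xlm l a θ * Xlm l' a θ := by
  obtain ⟨c, hc⟩ := exists_Xlm_eq l a
  obtain ⟨c', hc'⟩ := exists_Xlm_eq l' a
  have h (θ : ℝ) : Xlm l a θ * Xlm l' a θ = c * c' * ((sin θ ^ 2) ^ a.toNat *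
      (iteratedDeriv (l + a.toNat) (fun t : ℝ => (t ^ 2 - 1) ^ l) (cos θ) *
        iteratedDeriv (l' + a.toNat) (fun t : ℝ => (t ^ 2 - 1) ^ l') (cos θ))) := by
    rw [hc, hc', sq, ← abs_mul_abs_self, mul_pow]; ring
  rw [funext h]
  have hD := contDiff_iteratedDeriv_pow l (l + a.toNat)
  have hD' := contDiff_iteratedDeriv_pow l' (l' + a.toNat)
  fun_prop

lemma ae_sin_ne_zero : ∀ᵐ θ : ℝ, sin θ ≠ 0 :=
  ((Set.countable_range fun k : ℤ => k * π).ae_notMem volume).mono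
    fun _ hθ hsin => hθ (sin_eq_zero_iff.1 hsin)

lemma integral_dot3_Bv_Cv (l l' : ℕ) (m m' : ℤ) {θ : ℝ} (hθ : sin θ ≠ 0) :
    ∫ φ in (0 : ℝ)..2 * π, dot3 (Bv l m θ φ) (Cv l' m' θ φ) * sin θ =
      if m' = -m then
        -(2 * π * m) * (√(l * (l + 1)))⁻¹ * (√(l' * (l' + 1)))⁻¹ *
          deriv (fun t => Xlm l |m| t * Xlm l' |m| t) θ
      else 0 := by
  set c : ℝ := (√(l * (l + 1)))⁻¹ * (√(l' * (l' + 1)))⁻¹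
  have hpoint (φ : ℝ) : dot3 (Bv l m θ φ) (Cv l' m' θ φ) * sin θ =
      c * (m' * deriv (Xlm l |m|) θ * Xlm l' |m'| θ) * (azimuthal m φ * azimuthal (-m') φ)
        - c * (m * Xlm l |m| θ * deriv (Xlm l' |m'|) θ) *
          (azimuthal (-m) φ * azimuthal m' φ) := by
    simp only [dot3, Bv, Cv, Fin.sum_univ_three, Pi.smul_apply, smul_eq_mul, Matrix.cons_val_zero,
      Matrix.cons_val_one, Matrix.cons_val_two, Matrix.head_cons, Matrix.tail_cons,
      deriv_Ysph_polar, deriv_Ysph_azimuthal]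
    field_simp
    ring
  simp_rw [hpoint]
  rw [intervalIntegral.integral_sub, intervalIntegral.integral_const_mul,
    intervalIntegral.integral_const_mul, integral_azimuthal_mul_azimuthal,
    integral_azimuthal_mul_azimuthal]
  · by_cases h : m' = -m
    · subst h
      rw [abs_neg, deriv_fun_mul (differentiableAt_Xlm l |m| hθ) (differentiableAt_Xlm l' |m| hθ)]
      simp only [neg_neg, if_true]
      push_cast
      ring
    · rw [if_neg (by omega), if_neg (by omega), if_neg h]
      ring
  all_goals exact ((continuous_azimuthal _).mul (continuous_azimuthal _)).const_mul _
    |>.intervalIntegrable _ _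

theorem polar_cap_D_elements_general (l l' : ℕ) (m m' : ℤ) (Θ : ℝ) :
    (∫ θ in (0 : ℝ)..Θ, ∫ φ in (0 : ℝ)..(2 * Real.pi),
        dot3 (Bv l m θ φ) (Cv l' m' θ φ) * Real.sin θ) =
      if m' = -m then
        -(2 * Real.pi) * (m : ℝ) * Xlm l |m| Θ * Xlm l' |m| Θ /
          Real.sqrt ((l : ℝ) * ((l : ℝ) + 1) * ((l' : ℝ) * ((l' : ℝ) + 1)))
      else 0 := by
  rw [intervalIntegral.integral_congr_ae
    (ae_sin_ne_zero.mono fun θ hθ _ => integral_dot3_Bv_Cv l l' m m' hθ)]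
  split_ifs
  · have hP := contDiff_Xlm_mul_Xlm l l' |m|
    rw [intervalIntegral.integral_const_mul, intervalIntegral.integral_deriv_eq_sub
      (fun x _ => (hP.differentiable (by simp)).differentiableAt)
      ((hP.continuous_deriv (by simp)).intervalIntegrable _ _)]
    have hm0 : (m : ℝ) * (Xlm l |m| 0 * Xlm l' |m| 0) = 0 := by
      rcases eq_or_ne m 0 with rfl | hm
      · simp
      · simp [Xlm_zero_of_pos l (abs_pos.2 hm)]
    rw [sqrt_mul (by positivity : (0 : ℝ) ≤ l * (l + 1)), div_eq_mul_inv, mul_inv]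
    linear_combination (2 * π * (√(l * (l + 1)))⁻¹ * (√(l' * (l' + 1)))⁻¹) * hm0
  · simp

/-- For an axisymmetric polar cap of radius `Θ` the cross matrix elements
between the tangential harmonics are
`D_{lm,l'm'} = -2π δ_{-m,m'} m X_{lm}(Θ) X_{l'm}(Θ)/√(l(l+1)l'(l'+1))`;
in particular `D_{lm,l'm'} = 0` whenever `m' ≠ -m` (so `D` vanishes on the
order-0 block). -/
theorem polar_cap_D_elements (l l' : ℕ) (hl : 1 ≤ l) (hl' : 1 ≤ l')
    (m m' : ℤ) (hm : |m| ≤ (l : ℤ)) (hm' : |m'| ≤ (l' : ℤ))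
    (Θ : ℝ) (hΘ : Θ ∈ Set.Icc 0 Real.pi) :
    (∫ θ in (0 : ℝ)..Θ, ∫ φ in (0 : ℝ)..(2 * Real.pi),
        dot3 (Bv l m θ φ) (Cv l' m' θ φ) * Real.sin θ) =
      if m' = -m then
        -(2 * Real.pi) * (m : ℝ) * Xlm l |m| Θ * Xlm l' |m| Θ /
          Real.sqrt ((l : ℝ) * ((l : ℝ) + 1) * ((l' : ℝ) * ((l' : ℝ) + 1)))
      else 0 :=
  polar_cap_D_elements_general l l' m m' Θ
end
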